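/- For every R = (R₁,R₂) ∈ ℝ², every φ ∈ L²(ℝ, ℂ) and every g ∈ L²(ℝ, ℂ), the magnetic translation intertwines with the Wigner-type transform: 𝔪_R [W(φ, g)] = W(φ, t_R g), where (t_R g)(k) := e^{−i b R₁ R₂} e^{i k R₂} g(k − b R₁). -/

import Mathlib

open MeasureTheory Real

/-- Wigner-type transform: `W(φ,g)(x₁,x₂) = (2π)^{-1/2} ∫ e^{-i k x₂} φ(x₁ - k/b) g(k) dk`. -/
noncomputable def wigner (b : ℝ) (φ g : ℝ → ℂ) : ℝ × ℝ → ℂ := fun x =>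
  (Real.sqrt (2 * π))⁻¹ *
    ∫ k : ℝ, Complex.exp (-Complex.I * k * x.2) * φ (x.1 - k / b) * g k

/-- The magnetic translation `𝔪_R`:
`(𝔪_R f)(x₁,x₂) = e^{−i b R₁ x₂} f(x₁ − R₁, x₂ − R₂)`. -/
noncomputable def magTrans (b : ℝ) (R : ℝ × ℝ) (f : ℝ × ℝ → ℂ) : ℝ × ℝ → ℂ := fun x =>
  Complex.exp (-Complex.I * b * R.1 * x.2) * f (x.1 - R.1, x.2 - R.2)

/-
The substitution `k ↦ k - b R₁` in the integral defining `W(φ, g)` at `(x₁ - R₁, x₂ - R₂)` turns the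
argument of `φ` into `x₁ - k/b` and the phase `e^{-i b R₁ x₂} e^{-i (k - b R₁)(x₂ - R₂)}`
into `e^{-i k x₂} e^{-i b R₁ R₂} e^{i k R₂}`, which is the integrand of `W(φ, t_R g)` at `x`.
-/

theorem exp_magnetic_phase (b R₁ R₂ x₂ k : ℂ) :
    Complex.exp (-Complex.I * b * R₁ * x₂) * Complex.exp (-Complex.I * (k - b * R₁) * (x₂ - R₂)) =
      Complex.exp (-Complex.I * k * x₂) *
        (Complex.exp (-Complex.I * b * R₁ * R₂) * Complex.exp (Complex.I * k * R₂)) := by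
  simp only [← Complex.exp_add]
  ring_nf

theorem magTrans_wigner_general (b : ℝ) (hb : b ≠ 0) (R : ℝ × ℝ) (φ g : ℝ → ℂ) :
    ∀ x : ℝ × ℝ,
      magTrans b R (wigner b φ g) x =
        wigner b φ
          (fun k => Complex.exp (-Complex.I * b * R.1 * R.2) *
            Complex.exp (Complex.I * k * R.2) * g (k - b * R.1)) x := by
  intro x
  simp only [magTrans, wigner]
  rw [← integral_sub_right_eq_self _ (b * R.1), mul_left_comm, ← integral_const_mul]
  congr 2 with k
  have hφ_arg : x.1 - R.1 - (k - b * R.1) / b = x.1 - k / b := by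
    rw [sub_div, mul_div_cancel_left₀ _ hb]
    ring
  rw [hφ_arg]
  push_cast
  linear_combination φ (x.1 - k / b) * g (k - b * R.1) * exp_magnetic_phase b R.1 R.2 x.2 k

/-- Magnetic translations intertwine with the Wigner-type transform:
`𝔪_R[W(φ,g)] = W(φ, t_R g)` where `(t_R g)(k) = e^{−i b R₁ R₂} e^{i k R₂} g(k − b R₁)`. -/
theorem magTrans_wigner (b : ℝ) (hb : b ≠ 0) (R : ℝ × ℝ) (φ g : ℝ → ℂ)
    (hφ : MemLp φ 2 (volume : Measure ℝ)) (hg : MemLp g 2 (volume : Measure ℝ)) :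
    ∀ x : ℝ × ℝ,
      magTrans b R (wigner b φ g) x =
        wigner b φ
          (fun k => Complex.exp (-Complex.I * b * R.1 * R.2) *
            Complex.exp (Complex.I * k * R.2) * g (k - b * R.1)) x :=
  magTrans_wigner_general b hb R φ g
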